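/- For every t > 0, every x ∈ ℝ^d, and every direction u ∈ ℝ^d, the Hessian of the smoothed objective satisfies the second-order Tweedie identity uᵀ ∇²_x g(x;t) u = (λ/t²) · ( t‖u‖² − Var_{y∼p_{0|t}(·|x)}( ⟨y, u⟩ ) ). -/

import Mathlib

/-!
Every integral involved is `p₀` against a bounded continuous function of `x - y`, because
`‖z‖ ^ k * k(z;t)` is bounded for `k ≤ 2`; this justifies differentiating `p(x;t)` twice under
the integral sign. With `h(y) = ⟪x - y, u⟫` and `∂ᵤk(x - y;t) = -(h/t) k(x - y;t)` one gets
`∂ᵤp = -(1/t) ∫ p₀ k h` and `∂ᵤ²p = ∫ p₀ k (h²/t² - ‖u‖²/t)`, so the chain rule for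
`g = -λ log p` gives `∂ᵤ²g = (λ/t²) (t‖u‖² - Var h)` under the posterior. Finally
`h = ⟪x, u⟫ - ⟪y, u⟫` has the same posterior variance as `⟪y, u⟫`.
-/

open MeasureTheory
open scoped RealInnerProductSpace

/-- The Gibbs density `p₀(y) = e^{-f(y)/λ} / ∫ e^{-f(z)/λ} dz`. -/
noncomputable def gibbs {d : ℕ} (lam : ℝ) (f : EuclideanSpace ℝ (Fin d) → ℝ)
    (y : EuclideanSpace ℝ (Fin d)) : ℝ :=
  Real.exp (-(f y) / lam) / ∫ z, Real.exp (-(f z) / lam)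

/-- The Gaussian kernel `k(z;t) = (2πt)^{-d/2} e^{-‖z‖²/(2t)}`. -/
noncomputable def gaussK {d : ℕ} (t : ℝ) (z : EuclideanSpace ℝ (Fin d)) : ℝ :=
  (2 * Real.pi * t) ^ (-(d : ℝ) / 2) * Real.exp (-‖z‖ ^ 2 / (2 * t))

/-- The smoothed density `p(x;t) = ∫ p₀(y) k(x-y;t) dy`. -/
noncomputable def smoothedDensity {d : ℕ} (lam : ℝ) (f : EuclideanSpace ℝ (Fin d) → ℝ)
    (t : ℝ) (x : EuclideanSpace ℝ (Fin d)) : ℝ :=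
  ∫ y, gibbs lam f y * gaussK t (x - y)

/-- The smoothed objective `g(x;t) = -λ log p(x;t)`. -/
noncomputable def smoothedObj {d : ℕ} (lam : ℝ) (f : EuclideanSpace ℝ (Fin d) → ℝ)
    (t : ℝ) (x : EuclideanSpace ℝ (Fin d)) : ℝ :=
  -lam * Real.log (smoothedDensity lam f t x)

/-- The posterior density `p_{0|t}(y|x) = p₀(y) k(x-y;t) / p(x;t)`. -/
noncomputable def posterior {d : ℕ} (lam : ℝ) (f : EuclideanSpace ℝ (Fin d) → ℝ)
    (t : ℝ) (x y : EuclideanSpace ℝ (Fin d)) : ℝ :=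
  gibbs lam f y * gaussK t (x - y) / smoothedDensity lam f t x

/-- The Hessian quadratic form `uᵀ ∇²g(x) u`, as the second directional derivative. -/
noncomputable def hessQF {d : ℕ} (g : EuclideanSpace ℝ (Fin d) → ℝ)
    (x u : EuclideanSpace ℝ (Fin d)) : ℝ :=
  (fderiv ℝ (fun x' => (fderiv ℝ g x') u) x) u

open Filter

section Smoothing

variable {E F : Type*} [NormedAddCommGroup E] [MeasurableSpace E] [OpensMeasurableSpace E]
  [SecondCountableTopology E] [NormedAddCommGroup F] [NormedSpace ℝ F] {μ : Measure E}
  {q : E → ℝ}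

theorem integrable_smul_comp_sub (hq : Integrable q μ) {Φ : E → F} (hΦ : Continuous Φ) {C : ℝ}
    (hC : ∀ z, ‖Φ z‖ ≤ C) (x : E) : Integrable (fun y => q y • Φ (x - y)) μ :=
  hq.smul_bdd C (hΦ.comp (continuous_sub_left x)).aestronglyMeasurable
    (Eventually.of_forall fun y => hC (x - y))

theorem integrable_mul_comp_sub (hq : Integrable q μ) {φ : E → ℝ} (hφ : Continuous φ) {C : ℝ}
    (hC : ∀ z, |φ z| ≤ C) (x : E) : Integrable (fun y => q y * φ (x - y)) μ :=
  integrable_smul_comp_sub hq hφ hC x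

variable [NormedSpace ℝ E] {φ : E → ℝ} {C C' : ℝ}

theorem hasFDerivAt_integral_mul_comp_sub (hq : Integrable q μ) (hφ : ContDiff ℝ 1 φ)
    (hC : ∀ z, |φ z| ≤ C) (hC' : ∀ z, ‖fderiv ℝ φ z‖ ≤ C') (x : E) :
    HasFDerivAt (fun x => ∫ y, q y * φ (x - y) ∂μ) (∫ y, q y • fderiv ℝ φ (x - y) ∂μ) x := by
  refine hasFDerivAt_integral_of_dominated_of_fderiv_le
    (F := fun x y => q y * φ (x - y)) (F' := fun x y => q y • fderiv ℝ φ (x - y))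
    (bound := fun y => ‖q y‖ * C') univ_mem
    (Eventually.of_forall fun x => (integrable_mul_comp_sub hq hφ.continuous hC x).1)
    (integrable_mul_comp_sub hq hφ.continuous hC x)
    (integrable_smul_comp_sub hq (hφ.continuous_fderiv one_ne_zero) hC' x).1
    (Eventually.of_forall fun y x _ => ?_) (hq.norm.mul_const C')
    (Eventually.of_forall fun y x _ => ?_)
  · rw [norm_smul]
    exact mul_le_mul_of_nonneg_left (hC' _) (norm_nonneg _)
  · have h := (((hφ.differentiable one_ne_zero) (x - y)).hasFDerivAt.comp x
      ((hasFDerivAt_id x).sub_const y)).const_mul (q y)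
    simpa only [ContinuousLinearMap.comp_id, Function.comp_def, id] using h

theorem integral_smul_fderiv_comp_sub_apply (hq : Integrable q μ) (hφ : ContDiff ℝ 1 φ)
    (hC' : ∀ z, ‖fderiv ℝ φ z‖ ≤ C') (x v : E) :
    (∫ y, q y • fderiv ℝ φ (x - y) ∂μ) v = ∫ y, q y * fderiv ℝ φ (x - y) v ∂μ := by
  rw [ContinuousLinearMap.integral_apply
    (integrable_smul_comp_sub hq (hφ.continuous_fderiv one_ne_zero) hC' x)]
  rfl

end Smoothing

section Gaussian

variable {d : ℕ} {t : ℝ}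

local notation "E" => EuclideanSpace ℝ (Fin d)

theorem hessQF_const_mul_log {p : E → ℝ} {p' : E → E →L[ℝ] ℝ} {N' : E →L[ℝ] ℝ} (c : ℝ)
    (hp : ∀ x, HasFDerivAt p (p' x) x) (hp0 : ∀ x, p x ≠ 0) {x u : E}
    (hN : HasFDerivAt (fun x => p' x u) N' x) :
    hessQF (fun z => c * Real.log (p z)) x u = c * (N' u / p x - (p' x u / p x) ^ 2) := by
  have hgrad : (fun x => fderiv ℝ (fun z => c * Real.log (p z)) x u)
      = fun x => c * (p' x u * (p x)⁻¹) := by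
    funext x
    rw [(((hp x).log (hp0 x)).const_mul c).fderiv]
    simp only [smul_apply, smul_eq_mul]
    ring
  have hinv : HasFDerivAt (fun x => (p x)⁻¹) ((-(p x ^ 2)⁻¹) • p' x) x :=
    (hasDerivAt_inv (hp0 x)).comp_hasFDerivAt x (hp x)
  have hHess : HasFDerivAt (fun x => c * (p' x u * (p x)⁻¹))
      (c • (p' x u • ((-(p x ^ 2)⁻¹) • p' x) + (p x)⁻¹ • N')) x :=
    (hN.mul hinv).const_mul c
  unfold hessQF
  rw [hgrad, hHess.fderiv]
  simp only [smul_apply, add_apply, smul_eq_mul]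
  field_simp [hp0 x]
  ring

theorem gaussK_pos (ht : 0 < t) (z : E) : 0 < gaussK t z := by
  unfold gaussK
  positivity

theorem hasFDerivAt_gaussK (z : E) :
    HasFDerivAt (gaussK t) (-(gaussK t z / t) • innerSL ℝ z) z := by
  have h := (((hasStrictFDerivAt_norm_sq z).hasFDerivAt.neg.mul_const (2 * t)⁻¹).exp).const_mul
    ((2 * Real.pi * t) ^ (-(d : ℝ) / 2))
  refine (h.congr_fderiv ?_).congr_of_eventuallyEq (Eventually.of_forall fun z => ?_)
  · ext v
    simp only [gaussK, Pi.neg_apply, smul_apply, neg_apply, smul_eq_mul, nsmul_eq_mul,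
      div_eq_mul_inv]
    ring
  · simp only [gaussK, Pi.neg_apply, div_eq_mul_inv, neg_mul]

theorem contDiff_gaussK : ContDiff ℝ 1 (gaussK (d := d) t) :=
  contDiff_const.mul ((contDiff_norm_sq ℝ).neg.div_const _).exp

theorem norm_pow_mul_gaussK_le (ht : 0 < t) {k : ℕ} (hk : k ≤ 2) (z : E) :
    ‖z‖ ^ k * gaussK t z ≤ (2 * Real.pi * t) ^ (-(d : ℝ) / 2) * (1 + 2 * t) := by
  set s := ‖z‖ ^ 2 / (2 * t)
  have hs : 0 ≤ s := by positivity
  have hpow : ‖z‖ ^ k ≤ 1 + 2 * t * s := by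
    have : 2 * t * s = ‖z‖ ^ 2 := by simp only [s]; field_simp
    rw [this]
    interval_cases k <;> nlinarith [norm_nonneg z]
  have hexp : Real.exp (-s) ≤ 1 := Real.exp_le_one_iff.2 (neg_nonpos.2 hs)
  have hsexp : s * Real.exp (-s) ≤ 1 := by
    rw [Real.exp_neg, ← div_eq_mul_inv, div_le_one (Real.exp_pos s)]
    linarith [Real.add_one_le_exp s]
  have hK : gaussK t z = (2 * Real.pi * t) ^ (-(d : ℝ) / 2) * Real.exp (-s) := by
    simp only [gaussK, s, neg_div]
  have hC : 0 < (2 * Real.pi * t) ^ (-(d : ℝ) / 2) := by positivity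
  rw [hK]
  calc ‖z‖ ^ k * ((2 * Real.pi * t) ^ (-(d : ℝ) / 2) * Real.exp (-s))
      ≤ (1 + 2 * t * s) * ((2 * Real.pi * t) ^ (-(d : ℝ) / 2) * Real.exp (-s)) :=
        mul_le_mul_of_nonneg_right hpow (by positivity)
    _ = (2 * Real.pi * t) ^ (-(d : ℝ) / 2) * (Real.exp (-s) + 2 * t * (s * Real.exp (-s))) := by
        ring
    _ ≤ (2 * Real.pi * t) ^ (-(d : ℝ) / 2) * (1 + 2 * t) := by
        refine mul_le_mul_of_nonneg_left ?_ hC.le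
        nlinarith

theorem norm_fderiv_gaussK_le (ht : 0 < t) (z : E) :
    ‖fderiv ℝ (gaussK t) z‖ ≤ (2 * Real.pi * t) ^ (-(d : ℝ) / 2) * (1 + 2 * t) / t := by
  rw [(hasFDerivAt_gaussK z).fderiv, norm_smul, innerSL_apply_norm, norm_neg, Real.norm_eq_abs,
    abs_of_pos (div_pos (gaussK_pos ht z) ht), div_mul_eq_mul_div, mul_comm, ← pow_one ‖z‖]
  exact div_le_div_of_nonneg_right (norm_pow_mul_gaussK_le ht (by norm_num) z) ht.le

theorem abs_gaussK_mul_inner_pow_le (ht : 0 < t) {k : ℕ} (hk : k ≤ 2) (u z : E) :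
    |gaussK t z * ⟪z, u⟫ ^ k| ≤ (2 * Real.pi * t) ^ (-(d : ℝ) / 2) * (1 + 2 * t) * ‖u‖ ^ k := by
  rw [abs_mul, abs_pow, abs_of_pos (gaussK_pos ht z)]
  calc gaussK t z * |⟪z, u⟫| ^ k ≤ gaussK t z * (‖z‖ * ‖u‖) ^ k :=
        mul_le_mul_of_nonneg_left (pow_le_pow_left₀ (abs_nonneg _) (abs_real_inner_le_norm z u) k)
          (gaussK_pos ht z).le
    _ = ‖z‖ ^ k * gaussK t z * ‖u‖ ^ k := by ring
    _ ≤ _ := mul_le_mul_of_nonneg_right (norm_pow_mul_gaussK_le ht hk z) (by positivity)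

theorem hasFDerivAt_gaussK_mul_inner (u z : E) :
    HasFDerivAt (fun z => gaussK t z * ⟪z, u⟫)
      (gaussK t z • innerSL ℝ u - (gaussK t z * ⟪z, u⟫ / t) • innerSL ℝ z) z := by
  have hinner : HasFDerivAt (fun z : E => ⟪z, u⟫) (innerSL ℝ u) z := by
    have h : (fun z : E => ⟪z, u⟫) = innerSL ℝ u := by
      ext z
      rw [innerSL_apply_apply, real_inner_comm]
    rw [h]
    exact (innerSL ℝ u).hasFDerivAt
  refine ((hasFDerivAt_gaussK z).mul hinner).congr_fderiv ?_
  ext v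
  simp only [add_apply, sub_apply, smul_apply, smul_eq_mul]
  ring

theorem contDiff_gaussK_mul_inner (u : E) : ContDiff ℝ 1 (fun z => gaussK t z * ⟪z, u⟫) :=
  contDiff_gaussK.mul (contDiff_id.inner ℝ contDiff_const)

theorem norm_fderiv_gaussK_mul_inner_le (ht : 0 < t) (u z : E) :
    ‖fderiv ℝ (fun z => gaussK t z * ⟪z, u⟫) z‖
      ≤ (2 * Real.pi * t) ^ (-(d : ℝ) / 2) * (1 + 2 * t) * ‖u‖
        + (2 * Real.pi * t) ^ (-(d : ℝ) / 2) * (1 + 2 * t) * ‖u‖ / t := by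
  have hK := gaussK_pos ht z
  rw [(hasFDerivAt_gaussK_mul_inner u z).fderiv]
  refine (norm_sub_le _ _).trans (add_le_add ?_ ?_)
  · rw [norm_smul, innerSL_apply_norm, Real.norm_eq_abs, abs_of_pos hK]
    calc gaussK t z * ‖u‖ = ‖z‖ ^ 0 * gaussK t z * ‖u‖ := by ring
      _ ≤ _ := mul_le_mul_of_nonneg_right (norm_pow_mul_gaussK_le ht (by norm_num) z)
          (norm_nonneg u)
  · rw [norm_smul, innerSL_apply_norm, Real.norm_eq_abs, abs_div, abs_of_pos ht, abs_mul,
      abs_of_pos hK]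
    calc gaussK t z * |⟪z, u⟫| / t * ‖z‖ ≤ gaussK t z * (‖z‖ * ‖u‖) / t * ‖z‖ := by
          gcongr
          exact abs_real_inner_le_norm z u
      _ = ‖z‖ ^ 2 * gaussK t z * ‖u‖ / t := by ring
      _ ≤ _ := by
          gcongr ?_ * _ / _
          exact norm_pow_mul_gaussK_le ht le_rfl z

variable {q : EuclideanSpace ℝ (Fin d) → ℝ}

theorem integrable_mul_gaussK_mul_inner_pow (hq : Integrable q) (ht : 0 < t) {k : ℕ}
    (hk : k ≤ 2) (u x : E) :
    Integrable (fun y => q y * (gaussK t (x - y) * ⟪x - y, u⟫ ^ k)) :=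
  integrable_mul_comp_sub hq
    (contDiff_gaussK.continuous.mul ((continuous_id.inner continuous_const).pow k))
    (abs_gaussK_mul_inner_pow_le ht hk u) x

theorem integrable_mul_gaussK (hq : Integrable q) (ht : 0 < t) (x : E) :
    Integrable (fun y => q y * gaussK t (x - y)) := by
  simpa using integrable_mul_gaussK_mul_inner_pow hq ht (k := 0) (by norm_num) 0 x

theorem integrable_mul_gaussK_mul_inner (hq : Integrable q) (ht : 0 < t) (u x : E) :
    Integrable (fun y => q y * (gaussK t (x - y) * ⟪x - y, u⟫)) := by
  simpa using integrable_mul_gaussK_mul_inner_pow hq ht (k := 1) (by norm_num) u x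

theorem integrable_mul_gaussK_mul_inner_sq (hq : Integrable q) (ht : 0 < t) (u x : E) :
    Integrable (fun y => q y * (gaussK t (x - y) * ⟪x - y, u⟫ ^ 2)) :=
  integrable_mul_gaussK_mul_inner_pow hq ht le_rfl u x

theorem integral_mul_gaussK_pos (hq : Integrable q) (hq_pos : ∀ y, 0 < q y) (ht : 0 < t)
    (x : E) : 0 < ∫ y, q y * gaussK t (x - y) := by
  have hpos : ∀ y, 0 < q y * gaussK t (x - y) := fun y => mul_pos (hq_pos y) (gaussK_pos ht _)
  rw [integral_pos_iff_support_of_nonneg (fun y => (hpos y).le) (integrable_mul_gaussK hq ht x),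
    Function.support_eq_univ fun y => (hpos y).ne']
  exact Measure.measure_univ_pos.2 (NeZero.ne volume)

theorem hasFDerivAt_integral_mul_gaussK (hq : Integrable q) (ht : 0 < t) (x : E) :
    HasFDerivAt (fun x => ∫ y, q y * gaussK t (x - y))
      (∫ y, q y • fderiv ℝ (gaussK t) (x - y)) x :=
  hasFDerivAt_integral_mul_comp_sub hq contDiff_gaussK
    (fun z => by simpa using abs_gaussK_mul_inner_pow_le ht (k := 0) (by norm_num) 0 z)
    (norm_fderiv_gaussK_le ht) x

theorem integral_smul_fderiv_gaussK_apply (hq : Integrable q) (ht : 0 < t) (x u : E) :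
    (∫ y, q y • fderiv ℝ (gaussK t) (x - y)) u
      = -t⁻¹ * ∫ y, q y * (gaussK t (x - y) * ⟪x - y, u⟫) := by
  rw [integral_smul_fderiv_comp_sub_apply hq contDiff_gaussK (norm_fderiv_gaussK_le ht),
    ← integral_const_mul]
  congr 1
  ext y
  rw [(hasFDerivAt_gaussK (x - y)).fderiv]
  simp only [smul_apply, smul_eq_mul, innerSL_apply_apply]
  ring

theorem hasFDerivAt_integral_mul_gaussK_mul_inner (hq : Integrable q) (ht : 0 < t) (u x : E) :
    HasFDerivAt (fun x => ∫ y, q y * (gaussK t (x - y) * ⟪x - y, u⟫))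
      (∫ y, q y • fderiv ℝ (fun z => gaussK t z * ⟪z, u⟫) (x - y)) x :=
  hasFDerivAt_integral_mul_comp_sub (φ := fun z => gaussK t z * ⟪z, u⟫) hq
    (contDiff_gaussK_mul_inner u)
    (fun z => by simpa using abs_gaussK_mul_inner_pow_le ht (k := 1) (by norm_num) u z)
    (norm_fderiv_gaussK_mul_inner_le ht u) x

theorem integral_smul_fderiv_gaussK_mul_inner_apply (hq : Integrable q) (ht : 0 < t) (u x : E) :
    (∫ y, q y • fderiv ℝ (fun z => gaussK t z * ⟪z, u⟫) (x - y)) u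
      = ‖u‖ ^ 2 * (∫ y, q y * gaussK t (x - y))
        - (∫ y, q y * (gaussK t (x - y) * ⟪x - y, u⟫ ^ 2)) / t := by
  rw [integral_smul_fderiv_comp_sub_apply hq (contDiff_gaussK_mul_inner u)
      (norm_fderiv_gaussK_mul_inner_le ht u), ← integral_const_mul, ← integral_div,
    ← integral_sub ((integrable_mul_gaussK hq ht x).const_mul _)
      ((integrable_mul_gaussK_mul_inner_sq hq ht u x).div_const _)]
  congr 1
  ext y
  rw [(hasFDerivAt_gaussK_mul_inner u (x - y)).fderiv]
  simp only [sub_apply, smul_apply, smul_eq_mul, innerSL_apply_apply, real_inner_self_eq_norm_sq]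
  ring

theorem integral_mul_gaussK_mul_inner_eq (hq : Integrable q) (ht : 0 < t) (u x : E) :
    ∫ y, q y * gaussK t (x - y) * ⟪y, u⟫
      = ⟪x, u⟫ * (∫ y, q y * gaussK t (x - y))
        - ∫ y, q y * (gaussK t (x - y) * ⟪x - y, u⟫) := by
  rw [← integral_const_mul, ← integral_sub ((integrable_mul_gaussK hq ht x).const_mul _)
    (integrable_mul_gaussK_mul_inner hq ht u x)]
  congr 1
  ext y
  rw [inner_sub_left]
  ring

theorem integral_mul_gaussK_mul_inner_sq_eq (hq : Integrable q) (ht : 0 < t) (u x : E) :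
    ∫ y, q y * gaussK t (x - y) * ⟪y, u⟫ ^ 2
      = ⟪x, u⟫ ^ 2 * (∫ y, q y * gaussK t (x - y))
        - 2 * ⟪x, u⟫ * (∫ y, q y * (gaussK t (x - y) * ⟪x - y, u⟫))
        + ∫ y, q y * (gaussK t (x - y) * ⟪x - y, u⟫ ^ 2) := by
  have h0 := (integrable_mul_gaussK hq ht x).const_mul (⟪x, u⟫ ^ 2)
  have h1 := (integrable_mul_gaussK_mul_inner hq ht u x).const_mul (2 * ⟪x, u⟫)
  rw [← integral_const_mul, ← integral_const_mul, ← integral_sub h0 h1,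
    ← integral_add (by exact h0.sub h1) (integrable_mul_gaussK_mul_inner_sq hq ht u x)]
  congr 1
  ext y
  rw [inner_sub_left]
  ring

end Gaussian

theorem integral_posterior_mul {d : ℕ} (lam : ℝ) (f : EuclideanSpace ℝ (Fin d) → ℝ) (t : ℝ)
    (x : EuclideanSpace ℝ (Fin d)) (φ : EuclideanSpace ℝ (Fin d) → ℝ) :
    ∫ y, posterior lam f t x y * φ y
      = (∫ y, gibbs lam f y * gaussK t (x - y) * φ y) / smoothedDensity lam f t x := by
  rw [← integral_div]
  congr 1
  ext y
  rw [posterior]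
  ring

theorem tweedie_second_order_general
    (d : ℕ) (lam : ℝ)
    (f : EuclideanSpace ℝ (Fin d) → ℝ)
    (hZfin : Integrable (fun z => Real.exp (-(f z) / lam)))
    (t : ℝ) (ht : 0 < t) (x u : EuclideanSpace ℝ (Fin d)) :
    hessQF (fun z => smoothedObj lam f t z) x u
      = (lam / t ^ 2) *
          (t * ‖u‖ ^ 2 -
            ((∫ y, posterior lam f t x y * ⟪y, u⟫ ^ 2)
              - (∫ y, posterior lam f t x y * ⟪y, u⟫) ^ 2)) := by
  have hq : Integrable (gibbs lam f) := hZfin.div_const _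
  have hP : ∀ x, 0 < smoothedDensity lam f t x := integral_mul_gaussK_pos hq
    (fun y => div_pos (Real.exp_pos _) (integral_exp_pos hZfin)) ht
  have hgrad : (fun x => (∫ y, gibbs lam f y • fderiv ℝ (gaussK t) (x - y)) u)
      = fun x => -t⁻¹ * ∫ y, gibbs lam f y * (gaussK t (x - y) * ⟪x - y, u⟫) :=
    funext fun x => integral_smul_fderiv_gaussK_apply hq ht x u
  have hN := (hasFDerivAt_integral_mul_gaussK_mul_inner hq ht u x).const_mul (-t⁻¹)
  rw [← hgrad] at hN
  rw [show (fun z => smoothedObj lam f t z)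
      = fun z => -lam * Real.log (smoothedDensity lam f t z) from rfl,
    hessQF_const_mul_log (p := smoothedDensity lam f t) (-lam)
      (hasFDerivAt_integral_mul_gaussK hq ht) (fun x => (hP x).ne') hN]
  simp only [smul_apply, smul_eq_mul]
  rw [integral_smul_fderiv_gaussK_mul_inner_apply hq ht, integral_smul_fderiv_gaussK_apply hq ht,
    integral_posterior_mul, integral_posterior_mul, integral_mul_gaussK_mul_inner_eq hq ht,
    integral_mul_gaussK_mul_inner_sq_eq hq ht,
    show (∫ y, gibbs lam f y * gaussK t (x - y)) = smoothedDensity lam f t x from rfl]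
  field_simp [(hP x).ne']
  ring

/-- second-order Tweedie identity:
`uᵀ ∇²g(x;t) u = (λ/t²) (t‖u‖² - Var_{y ∼ p_{0|t}(·|x)}(⟨y, u⟩))`. -/
theorem tweedie_second_order
    (d : ℕ) (hd : 1 ≤ d) (lam : ℝ) (hlam : 0 < lam)
    (f : EuclideanSpace ℝ (Fin d) → ℝ) (hf : Measurable f)
    (hZpos : 0 < ∫ z, Real.exp (-(f z) / lam))
    (hZfin : Integrable (fun z => Real.exp (-(f z) / lam)))
    (hmom2 : Integrable (fun y => ‖y‖ ^ 2 * gibbs lam f y))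
    (t : ℝ) (ht : 0 < t) (x u : EuclideanSpace ℝ (Fin d)) :
    hessQF (fun z => smoothedObj lam f t z) x u
      = (lam / t ^ 2) *
          (t * ‖u‖ ^ 2 -
            ((∫ y, posterior lam f t x y * ⟪y, u⟫ ^ 2)
              - (∫ y, posterior lam f t x y * ⟪y, u⟫) ^ 2)) :=
  tweedie_second_order_general d lam f hZfin t ht x u
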